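/- arXiv:2107.05629 — 8 statements merged into one kernel-verified Lean document; each statement's English description precedes it below -/
import Mathlib

section
/- For every integer n, every natural number k, and every positive integer N, the k-th iterate of the Collatz function satisfies T^k(N) = F_n^k(N + 2n + 1) - (2n + 1). -/
def T (N : ℤ) : ℤ := if Even N then N / 2 else (3 * N + 1) / 2

def F (n : ℤ) (P : ℤ) : ℤ := if Even P then (3 * P - 2 * n) / 2 else (P + 2 * n + 1) / 2

lemma key_step (n N : ℤ) : F n (N + 2 * n + 1) = T N + 2 * n + 1 := by
  by_cases h : Even N
  · have h' : ¬ Even (N + 2 * n + 1) := by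
      obtain ⟨m, hm⟩ := h
      intro ⟨l, hl⟩; omega
    simp only [F, T, if_pos h, if_neg h']
    obtain ⟨m, hm⟩ := h
    omega
  · have h' : Even (N + 2 * n + 1) := by
      rw [Int.not_even_iff_odd] at h
      obtain ⟨m, hm⟩ := h
      exact ⟨m + n + 1, by omega⟩
    simp only [F, T, if_pos h', if_neg h]
    rw [Int.not_even_iff_odd] at h
    obtain ⟨m, hm⟩ := h
    omega

lemma stmt_aux (n : ℤ) (k : ℕ) (N : ℤ) :
    T^[k] N = (F n)^[k] (N + 2 * n + 1) - (2 * n + 1) := by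
  induction k generalizing N with
  | zero => simp
  | succ k ih =>
    rw [Function.iterate_succ_apply, Function.iterate_succ_apply, key_step]
    have := ih (T N)
    linarith [this]

theorem stmt_1 (n : ℤ) (k : ℕ) (N : ℤ) (hN : 0 < N) :
    T^[k] N = (F n)^[k] (N + 2 * n + 1) - (2 * n + 1) := by
  exact stmt_aux n k N
end

section
/- For every integer n, every natural number k, and every positive integer N, one has T^k(N) = (F_n^k(N + A_n) + F_{-n-1}^k(N + A_{-n-1})) / 2, where A_n = 2n+1 and A_{-n-1} = -2n-1. -/
def A (n : ℤ) : ℤ := 2 * n + 1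

lemma F_step (n M : ℤ) : F n (M + A n) = T M + A n := by
  unfold F T A
  by_cases h : Even M
  · have h2 : ¬ Even (M + (2 * n + 1)) := by
      simp [Int.even_add, h, Int.even_add_one, parity_simps]
    obtain ⟨m, rfl⟩ := h
    rw [if_neg h2, if_pos (by exact ⟨m, rfl⟩)]
    omega
  · have h2 : Even (M + (2 * n + 1)) := by
      simp [Int.even_add, h, parity_simps]
    obtain ⟨m, rfl⟩ := Int.not_even_iff_odd.mp h
    rw [if_pos h2, if_neg (by simpa using h)]
    have : Even (3 * (2 * m + 1) + 1) := ⟨3 * m + 2, by ring⟩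
    omega

lemma F_iter (n M : ℤ) (k : ℕ) : (F n)^[k] (M + A n) = T^[k] M + A n := by
  induction k generalizing M with
  | zero => simp
  | succ k ih =>
    rw [Function.iterate_succ_apply, Function.iterate_succ_apply, F_step, ih]

theorem stmt_2 (n : ℤ) (k : ℕ) (N : ℤ) (hN : 0 < N) :
    T^[k] N = ((F n)^[k] (N + A n) + (F (-n - 1))^[k] (N + A (-n - 1))) / 2 := by
  rw [F_iter, F_iter]
  unfold A
  omega
end

section
/- For every natural number k and every positive integer N, the quantity F_n^k(N + A_n) - A_n does not depend on the integer n; that is, for all integers n and m, F_n^k(N + A_n) - A_n = F_m^k(N + A_m) - A_m. -/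
def G (Q : ℤ) : ℤ := if Even Q then Q / 2 else (3 * Q + 1) / 2

lemma key (n Q : ℤ) : F n (Q + A n) = G Q + A n := by
  unfold F G A
  simp only [Int.even_iff] at *
  split_ifs with h1 h2 h2 <;> omega

lemma iter_key (k : ℕ) (n Q : ℤ) : (F n)^[k] (Q + A n) = G^[k] Q + A n := by
  induction k generalizing Q with
  | zero => simp
  | succ k ih =>
    rw [Function.iterate_succ_apply, Function.iterate_succ_apply, key, ih]

theorem stmt_4 (k : ℕ) (N : ℤ) (hN : 0 < N) (n m : ℤ) :
    (F n)^[k] (N + A n) - A n = (F m)^[k] (N + A m) - A m := by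
  rw [iter_key, iter_key]; ring
end

section
/- The following are equivalent: (i) for every positive integer N there exists a positive natural number k with T^k(N) = 1; (ii) for every integer n and every integer P with P ≥ 2n + 2, there exists a positive natural number m with F_n^m(P) = 2n + 2. -/
lemma F_conj (n P : ℤ) : F n P = T (P - 2 * n - 1) + 2 * n + 1 := by
  simp only [F, T, Int.even_iff]
  split_ifs with h1 h2 h2 <;> omega

lemma F_conj_iter (n : ℤ) (m : ℕ) (P : ℤ) :
    (F n)^[m] P = T^[m] (P - 2 * n - 1) + 2 * n + 1 := by
  induction m generalizing P with
  | zero => simp only [Function.iterate_zero, id]; ring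
  | succ m ih =>
    rw [Function.iterate_succ_apply, Function.iterate_succ_apply, F_conj, ih]
    ring_nf

theorem stmt_7 :
    (∀ N : ℤ, 0 < N → ∃ k : ℕ, 0 < k ∧ T^[k] N = 1) ↔
    (∀ n : ℤ, ∀ P : ℤ, 2 * n + 2 ≤ P → ∃ m : ℕ, 0 < m ∧ (F n)^[m] P = 2 * n + 2) := by
  constructor
  · intro h n P hP
    obtain ⟨k, hk, hk1⟩ := h (P - 2 * n - 1) (by omega)
    exact ⟨k, hk, by rw [F_conj_iter, hk1]; ring⟩
  · intro h N hN
    obtain ⟨m, hm, hm1⟩ := h 0 (N + 1) (by omega)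
    rw [F_conj_iter] at hm1
    have e : N + 1 - 2 * 0 - 1 = N := by ring
    rw [e] at hm1
    exact ⟨m, hm, by omega⟩
end

section
/- Fix an integer n. If for every integer P with P ≥ 2n + 2 there exists a positive natural number m with F_n^m(P) = 2n + 2, then for every positive integer N there exists a positive natural number k with T^k(N) = 1. -/
lemma semiconj_add_T_F (n : ℤ) : Function.Semiconj (· + (2 * n + 1)) T (F n) := by
  intro N
  have hparity : Even (N + (2 * n + 1)) ↔ ¬Even N := by
    rw [Int.even_add, Int.even_add_one]
    simp
  simp only [T, F, hparity, Int.even_iff]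
  split_ifs <;> omega

theorem stmt_8 (n : ℤ)
    (h : ∀ P : ℤ, 2 * n + 2 ≤ P → ∃ m : ℕ, 0 < m ∧ (F n)^[m] P = 2 * n + 2) :
    ∀ N : ℤ, 0 < N → ∃ k : ℕ, 0 < k ∧ T^[k] N = 1 := by
  intro N hN
  obtain ⟨m, hm, hFm⟩ := h (N + (2 * n + 1)) (by omega)
  refine ⟨m, hm, ?_⟩
  have hconj : T^[m] N + (2 * n + 1) = (F n)^[m] (N + (2 * n + 1)) :=
    (semiconj_add_T_F n).iterate_right m N
  omega
end

section
/- For every integer n, every natural number k, and every positive integer N, the number of indices j with 0 ≤ j < k such that T^j(N) is odd equals the number of indices j with 0 ≤ j < k such that F_n^j(N + A_n) is even; that is, β_k(N) = α_{n,k}(N + A_n). -/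
/-! Translation by the odd number `A n` conjugates `T` to `F n`, so the `F n`-orbit of `N + A n`
is the `T`-orbit of `N` shifted by `A n`, and the shift exchanges even and odd. -/

lemma even_add_A_iff_odd (n x : ℤ) : Even (x + A n) ↔ Odd x := by
  simp only [Int.even_add', iff_true_intro (show Odd (A n) from ⟨n, rfl⟩), iff_true]

lemma semiconj_add_A_T_F (n : ℤ) : Function.Semiconj (· + A n) T (F n) := by
  intro x
  simp only [F, T, A]
  rcases Int.even_or_odd x with ⟨m, rfl⟩ | ⟨m, rfl⟩ <;>
    split_ifs <;> simp_all [Int.even_iff, Int.odd_iff] <;> omega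

lemma iterate_F_add_A (n x : ℤ) (j : ℕ) : (F n)^[j] (x + A n) = T^[j] x + A n :=
  ((semiconj_add_A_T_F n).iterate_right j x).symm

theorem stmt_10_general (n : ℤ) (k : ℕ) (N : ℤ) :
    ((Finset.range k).filter (fun j => Odd (T^[j] N))).card =
      ((Finset.range k).filter (fun j => Even ((F n)^[j] (N + A n)))).card := by
  congr 1
  refine Finset.filter_congr fun j _ => ?_
  rw [iterate_F_add_A, even_add_A_iff_odd]

theorem stmt_10 (n : ℤ) (k : ℕ) (N : ℤ) (hN : 0 < N) :
    ((Finset.range k).filter (fun j => Odd (T^[j] N))).card =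
      ((Finset.range k).filter (fun j => Even ((F n)^[j] (N + A n)))).card :=
  stmt_10_general n k N
end

section
/- For all integers n and m, every natural number k, and every positive integer N, the rational numbers satisfy (3^{β_k(N)} / 2^k) · (A_n - A_m) + φ_{n,k}(N + A_n) - φ_{m,k}(N + A_m) = A_n - A_m. -/
def beta (k : ℕ) (N : ℤ) : ℕ := ((Finset.range k).filter (fun j => Odd (T^[j] N))).card

def alpha (n : ℤ) (k : ℕ) (P : ℤ) : ℕ :=
  ((Finset.range k).filter (fun j => Even ((F n)^[j] P))).card

def phi (n : ℤ) (k : ℕ) (P : ℤ) : ℚ :=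
  ((F n)^[k] P : ℚ) - ((3 : ℚ) ^ alpha n k P / 2 ^ k) * (P : ℚ)

def r (k : ℕ) (N : ℤ) : ℚ :=
  (T^[k] N : ℚ) - ((3 : ℚ) ^ beta k N / 2 ^ k) * (N : ℚ)

lemma F_shift (n N : ℤ) : F n (N + A n) = T N + A n := by
  unfold F T A
  split_ifs with h1 h2 h2 <;> simp only [Int.even_iff] at h1 h2 <;> omega

lemma F_iter_shift (n N : ℤ) (k : ℕ) : (F n)^[k] (N + A n) = T^[k] N + A n := by
  induction k with
  | zero => simp
  | succ k ih =>
      rw [Function.iterate_succ_apply', Function.iterate_succ_apply', ih, F_shift]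

lemma alpha_eq_beta (n N : ℤ) (k : ℕ) : alpha n k (N + A n) = beta k N := by
  unfold alpha beta
  apply Finset.card_bij (fun a _ => a) <;> intro a
  · intro ha
    simp only [Finset.mem_filter, Finset.mem_range] at *
    refine ⟨ha.1, ?_⟩
    have := ha.2
    rw [F_iter_shift] at this
    rcases this with ⟨c, hc⟩
    exact ⟨c - n - 1, by unfold A at hc; omega⟩
  · intros b ha hb h; exact h
  · intro ha
    simp only [Finset.mem_filter, Finset.mem_range] at *
    refine ⟨a, ⟨ha.1, ?_⟩, rfl⟩
    rw [F_iter_shift]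
    rcases ha.2 with ⟨c, hc⟩
    exact ⟨c + n + 1, by unfold A; omega⟩

theorem stmt_13 (n m : ℤ) (k : ℕ) (N : ℤ) (hN : 0 < N) :
    ((3 : ℚ) ^ beta k N / 2 ^ k) * ((A n : ℚ) - (A m : ℚ)) +
        phi n k (N + A n) - phi m k (N + A m) =
      (A n : ℚ) - (A m : ℚ) := by
  unfold phi
  rw [alpha_eq_beta, alpha_eq_beta, F_iter_shift, F_iter_shift]
  push_cast
  ring
end

section
/- For every integer n and every integer P with P ≥ 2n + 2, the equation T^k(P - A_n) = F_n^k(P) - A_n holds for every natural number k, where A_n = 2n + 1. -/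
lemma step_aux (n P : ℤ) : T (P - A n) = F n P - A n := by
  simp only [T, F, A, Int.even_iff]
  split_ifs <;> omega

theorem stmt_17 (n : ℤ) (P : ℤ) (hP : 2 * n + 2 ≤ P) (k : ℕ) :
    T^[k] (P - A n) = (F n)^[k] P - A n := by
  clear hP
  induction k generalizing P with
  | zero => simp
  | succ k ih =>
    rw [Function.iterate_succ_apply, Function.iterate_succ_apply, step_aux, ih]
end
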